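/- arXiv:1105.1552 — 13 statements merged into one kernel-verified Lean document; each statement's English description precedes it below -/
import Mathlib

section
/- For all θ, θ′ ∈ ℝ one has 2ω₊(θ)² ≥ c₁ + c₂ + |c₁ − c₂| > c₁ + c₂ − |c₁ − c₂| ≥ 2ω₋(θ′)²; in particular the optical and acoustical branches are strictly separated: ω₊(θ) > ω₋(θ′) for all θ, θ′ ∈ ℝ. -/
/-- The optical dispersion branch of the diatomic chain. -/
noncomputable def omegaP (v11 v21 c1 c2 θ : ℝ) : ℝ :=
  Real.sqrt ((c1 + c2 + Real.sqrt ((c1 - c2) ^ 2 + 8 * v11 * v21 * (Real.cos θ + 1))) / 2)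

/-- The acoustical dispersion branch of the diatomic chain. -/
noncomputable def omegaM (v11 v21 c1 c2 θ : ℝ) : ℝ :=
  Real.sqrt ((c1 + c2 - Real.sqrt ((c1 - c2) ^ 2 + 8 * v11 * v21 * (Real.cos θ + 1))) / 2)

theorem branches_strictly_separated (v11 v21 c1 c2 : ℝ)
    (hv : v11 * v21 > 0) (hsum : c1 + c2 > 0) (hprod : c1 * c2 > 4 * (v11 * v21))
    (hlt : c2 > c1) (θ θ' : ℝ) :
    2 * (omegaP v11 v21 c1 c2 θ) ^ 2 ≥ c1 + c2 + |c1 - c2| ∧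
    c1 + c2 + |c1 - c2| > c1 + c2 - |c1 - c2| ∧
    c1 + c2 - |c1 - c2| ≥ 2 * (omegaM v11 v21 c1 c2 θ') ^ 2 ∧
    omegaP v11 v21 c1 c2 θ > omegaM v11 v21 c1 c2 θ' := by
  set D := (c1 - c2) ^ 2 + 8 * v11 * v21 * (Real.cos θ + 1) with hDdef
  set D' := (c1 - c2) ^ 2 + 8 * v11 * v21 * (Real.cos θ' + 1) with hD'def
  have habs : (0:ℝ) < |c1 - c2| := abs_pos.mpr (by linarith)
  -- generic bounds for any angle
  have key : ∀ φ : ℝ, |c1 - c2| ≤ Real.sqrt ((c1 - c2) ^ 2 + 8 * v11 * v21 * (Real.cos φ + 1)) ∧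
      Real.sqrt ((c1 - c2) ^ 2 + 8 * v11 * v21 * (Real.cos φ + 1)) < c1 + c2 := by
    intro φ
    have hc1 : Real.cos φ + 1 ≥ 0 := by nlinarith [Real.neg_one_le_cos φ]
    have hc2 : Real.cos φ + 1 ≤ 2 := by nlinarith [Real.cos_le_one φ]
    constructor
    · rw [← Real.sqrt_sq_eq_abs]
      apply Real.sqrt_le_sqrt
      nlinarith
    · have h1 : (c1 - c2) ^ 2 + 8 * v11 * v21 * (Real.cos φ + 1) < (c1 + c2) ^ 2 := by
        nlinarith
      calc Real.sqrt ((c1 - c2) ^ 2 + 8 * v11 * v21 * (Real.cos φ + 1))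
          < Real.sqrt ((c1 + c2) ^ 2) := by
            apply Real.sqrt_lt_sqrt (by nlinarith [sq_nonneg (c1 - c2)]) h1
        _ = c1 + c2 := Real.sqrt_sq hsum.le
  obtain ⟨hDl, hDu⟩ := key θ
  obtain ⟨hD'l, hD'u⟩ := key θ'
  have hsD : (0:ℝ) ≤ Real.sqrt D := Real.sqrt_nonneg _
  have hsD' : (0:ℝ) ≤ Real.sqrt D' := Real.sqrt_nonneg _
  have hP : (omegaP v11 v21 c1 c2 θ) ^ 2 = (c1 + c2 + Real.sqrt D) / 2 := by
    rw [omegaP, Real.sq_sqrt (by linarith)]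
  have hM : (omegaM v11 v21 c1 c2 θ') ^ 2 = (c1 + c2 - Real.sqrt D') / 2 := by
    rw [omegaM, Real.sq_sqrt (by linarith)]
  refine ⟨by rw [hP]; linarith, by linarith, by rw [hM]; linarith, ?_⟩
  rw [omegaP, omegaM]
  apply Real.sqrt_lt_sqrt (by linarith)
  linarith
end

section
/- For all real ω and θ, det H(ω,θ) = 0 if and only if ω² = ω₊(θ)² or ω² = ω₋(θ)². -/
/-- The dispersion matrix of the diatomic chain. -/
noncomputable def dispH (v11 v21 c1 c2 ω θ : ℝ) : Matrix (Fin 2) (Fin 2) ℂ :=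
  !![(ω : ℂ) ^ 2 - (c1 : ℂ), (v11 : ℂ) * (Complex.exp (Complex.I * θ) + 1);
     (v21 : ℂ) * (1 + Complex.exp (-(Complex.I * θ))), (ω : ℂ) ^ 2 - (c2 : ℂ)]

theorem dispersion_relation (v11 v21 c1 c2 : ℝ)
    (hv : v11 * v21 > 0) (hsum : c1 + c2 > 0) (hprod : c1 * c2 > 4 * (v11 * v21))
    (hlt : c2 > c1) (ω θ : ℝ) :
    (dispH v11 v21 c1 c2 ω θ).det = 0 ↔
      ω ^ 2 = (omegaP v11 v21 c1 c2 θ) ^ 2 ∨ ω ^ 2 = (omegaM v11 v21 c1 c2 θ) ^ 2 := by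
  have hcos : (0:ℝ) ≤ Real.cos θ + 1 := by nlinarith [Real.neg_one_le_cos θ]
  have hD0 : 0 ≤ (c1 - c2) ^ 2 + 8 * v11 * v21 * (Real.cos θ + 1) := by
    nlinarith [sq_nonneg (c1 - c2), mul_nonneg hv.le hcos]
  set s := Real.sqrt ((c1 - c2) ^ 2 + 8 * v11 * v21 * (Real.cos θ + 1)) with hsdef
  have hs : s ^ 2 = (c1 - c2) ^ 2 + 8 * v11 * v21 * (Real.cos θ + 1) := Real.sq_sqrt hD0
  have hs0 : 0 ≤ s := Real.sqrt_nonneg _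
  have hsle : s ≤ c1 + c2 := by
    have hle : (c1 - c2) ^ 2 + 8 * v11 * v21 * (Real.cos θ + 1) ≤ (c1 + c2) ^ 2 := by
      nlinarith [Real.cos_le_one θ, hv.le]
    calc s ≤ Real.sqrt ((c1 + c2) ^ 2) := Real.sqrt_le_sqrt hle
      _ = c1 + c2 := Real.sqrt_sq hsum.le
  have hp : omegaP v11 v21 c1 c2 θ ^ 2 = (c1 + c2 + s) / 2 := by
    rw [omegaP, ← hsdef]; exact Real.sq_sqrt (by linarith)
  have hm : omegaM v11 v21 c1 c2 θ ^ 2 = (c1 + c2 - s) / 2 := by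
    rw [omegaM, ← hsdef]; exact Real.sq_sqrt (by linarith)
  have key : (Complex.exp (Complex.I * θ) + 1) * (1 + Complex.exp (-(Complex.I * θ)))
      = 2 * (Complex.cos (θ:ℂ) + 1) := by
    have h1 : Complex.I * (θ:ℂ) = (θ:ℂ) * Complex.I := mul_comm _ _
    rw [h1, Complex.exp_mul_I, ← neg_mul, Complex.exp_mul_I, Complex.cos_neg, Complex.sin_neg]
    have h4 := Complex.sin_sq_add_cos_sq (θ:ℂ)
    linear_combination h4 - Complex.sin (θ:ℂ) ^ 2 * Complex.I_sq
  have hdet : (dispH v11 v21 c1 c2 ω θ).det =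
      (((ω ^ 2 - c1) * (ω ^ 2 - c2) - 2 * v11 * v21 * (Real.cos θ + 1) : ℝ) : ℂ) := by
    rw [dispH, Matrix.det_fin_two_of]
    push_cast
    linear_combination -(v11 : ℂ) * (v21 : ℂ) * key
  rw [hdet, Complex.ofReal_eq_zero, hp, hm]
  have factor : (ω ^ 2 - c1) * (ω ^ 2 - c2) - 2 * v11 * v21 * (Real.cos θ + 1)
      = (ω ^ 2 - (c1 + c2 + s) / 2) * (ω ^ 2 - (c1 + c2 - s) / 2) := by
    linear_combination (1/4 : ℝ) * hs
  rw [factor, mul_eq_zero, sub_eq_zero, sub_eq_zero]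
end

section
/- Let θ ∈ (−π, π) and let ω ∈ ℝ satisfy ω² = ω₊(θ)² or ω² = ω₋(θ)². Then ω² ≠ c₂, the number ρ := (ω² − c₁)/(v₁₁(e^{iθ} + 1)) is well defined, satisfies ρ = v₂₁(e^{−iθ} + 1)/(ω² − c₂) and ρ ≠ 0, and for every A = (A₁, A₂) ∈ ℂ² one has H(ω,θ)A = 0 if and only if A₂ = −ρA₁. -/
theorem eigenvector_relation (v11 v21 c1 c2 : ℝ)
    (hv : v11 * v21 > 0) (hsum : c1 + c2 > 0) (hprod : c1 * c2 > 4 * (v11 * v21))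
    (hlt : c2 > c1) (θ : ℝ) (hθ : θ ∈ Set.Ioo (-Real.pi) Real.pi) (ω : ℝ)
    (hω : ω ^ 2 = (omegaP v11 v21 c1 c2 θ) ^ 2 ∨ ω ^ 2 = (omegaM v11 v21 c1 c2 θ) ^ 2) :
    ω ^ 2 ≠ c2 ∧
    (v11 : ℂ) * (Complex.exp (Complex.I * θ) + 1) ≠ 0 ∧
    ((ω : ℂ) ^ 2 - (c1 : ℂ)) / ((v11 : ℂ) * (Complex.exp (Complex.I * θ) + 1)) =
      (v21 : ℂ) * (Complex.exp (-(Complex.I * θ)) + 1) / ((ω : ℂ) ^ 2 - (c2 : ℂ)) ∧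
    ((ω : ℂ) ^ 2 - (c1 : ℂ)) / ((v11 : ℂ) * (Complex.exp (Complex.I * θ) + 1)) ≠ 0 ∧
    (∀ A : Fin 2 → ℂ,
      (dispH v11 v21 c1 c2 ω θ).mulVec A = 0 ↔
        A 1 = -(((ω : ℂ) ^ 2 - (c1 : ℂ)) /
          ((v11 : ℂ) * (Complex.exp (Complex.I * θ) + 1))) * A 0) := by
  obtain ⟨hθ1, hθ2⟩ := hθ
  -- cos θ + 1 > 0
  have hcos : 0 < Real.cos θ + 1 := by
    have hh : θ / 2 ∈ Set.Ioo (-(Real.pi/2)) (Real.pi/2) := ⟨by linarith, by linarith⟩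
    have hcp : 0 < Real.cos (θ/2) := Real.cos_pos_of_mem_Ioo hh
    have hsq := Real.cos_sq (θ/2)
    have h2 : 2 * (θ/2) = θ := by ring
    rw [h2] at hsq
    nlinarith
  have hcos2 : Real.cos θ + 1 ≤ 2 := by nlinarith [Real.cos_le_one θ]
  have h8 : 0 < v11 * v21 * (Real.cos θ + 1) := mul_pos hv hcos
  have hS : (0:ℝ) ≤ (c1 - c2) ^ 2 + 8 * v11 * v21 * (Real.cos θ + 1) := by nlinarith [sq_nonneg (c1 - c2)]
  have hD := Real.sq_sqrt hS
  have hd0 := Real.sqrt_nonneg ((c1 - c2) ^ 2 + 8 * v11 * v21 * (Real.cos θ + 1))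
  -- key real identity
  have K : (ω ^ 2 - c1) * (ω ^ 2 - c2) = 2 * (v11 * v21) * (Real.cos θ + 1) := by
    rcases hω with h | h
    · rw [omegaP, Real.sq_sqrt (by linarith)] at h
      rw [h]; linear_combination hD / 4
    · rw [omegaM] at h
      have hle : Real.sqrt ((c1 - c2) ^ 2 + 8 * v11 * v21 * (Real.cos θ + 1)) ≤ c1 + c2 := by
        nlinarith
      rw [Real.sq_sqrt (by linarith)] at h
      rw [h]; linear_combination hD / 4
  have hpos : 0 < 2 * (v11 * v21) * (Real.cos θ + 1) := by positivity
  have hc2 : ω ^ 2 ≠ c2 := by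
    intro h; rw [h] at K; nlinarith
  have hc1 : ω ^ 2 ≠ c1 := by
    intro h; rw [h] at K; nlinarith
  have hv11 : v11 ≠ 0 := by rintro rfl; simp at hv
  -- complex facts
  have hzw : Complex.exp (Complex.I * θ) * Complex.exp (-(Complex.I * θ)) = 1 := by
    rw [← Complex.exp_add]; simp
  have hcosC : Complex.cos (θ : ℂ) =
      (Complex.exp (Complex.I * θ) + Complex.exp (-(Complex.I * θ))) / 2 := by
    rw [Complex.cos]; ring_nf
  have hE : (Complex.exp (Complex.I * θ) + 1) * (Complex.exp (-(Complex.I * θ)) + 1) =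
      2 * (Complex.cos (θ : ℂ) + 1) := by
    rw [hcosC]; linear_combination hzw
  have hz1 : Complex.exp (Complex.I * θ) + 1 ≠ 0 := by
    intro h
    have h0 : (Complex.exp (Complex.I * θ) + 1) * (Complex.exp (-(Complex.I * θ)) + 1) = 0 := by
      rw [h]; ring
    rw [hE] at h0
    have h2 : ((Real.cos θ + 1 : ℝ) : ℂ) = 0 := by push_cast; linear_combination h0 / 2
    have := Complex.ofReal_eq_zero.mp h2
    linarith
  have hden : (v11 : ℂ) * (Complex.exp (Complex.I * θ) + 1) ≠ 0 :=
    mul_ne_zero (by exact_mod_cast hv11) hz1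
  have hc1C : (ω : ℂ) ^ 2 - (c1 : ℂ) ≠ 0 := by
    intro h
    apply hc1
    have h2 : ((ω ^ 2 - c1 : ℝ) : ℂ) = 0 := by push_cast; linear_combination h
    have := Complex.ofReal_eq_zero.mp h2
    linarith
  have hc2C : (ω : ℂ) ^ 2 - (c2 : ℂ) ≠ 0 := by
    intro h
    apply hc2
    have h2 : ((ω ^ 2 - c2 : ℝ) : ℂ) = 0 := by push_cast; linear_combination h
    have := Complex.ofReal_eq_zero.mp h2
    linarith
  -- complex key identity
  have KC : ((ω : ℂ) ^ 2 - c1) * ((ω : ℂ) ^ 2 - c2) =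
      (v11 : ℂ) * (v21 : ℂ) *
        ((Complex.exp (Complex.I * θ) + 1) * (Complex.exp (-(Complex.I * θ)) + 1)) := by
    have KC' := congrArg (fun x : ℝ => (x : ℂ)) K
    push_cast at KC'
    rw [hE]
    linear_combination KC'
  refine ⟨hc2, hden, ?_, ?_, ?_⟩
  · rw [div_eq_div_iff hden hc2C]
    linear_combination KC
  · exact div_ne_zero hc1C hden
  · intro A
    constructor
    · intro h
      have h0 := congrFun h 0
      simp [dispH, Matrix.mulVec, dotProduct, Fin.sum_univ_two] at h0
      rw [show -(((ω : ℂ) ^ 2 - (c1 : ℂ)) / ((v11 : ℂ) * (Complex.exp (Complex.I * θ) + 1))) * A 0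
          = (-(((ω : ℂ) ^ 2 - (c1 : ℂ)) * A 0)) / ((v11 : ℂ) * (Complex.exp (Complex.I * θ) + 1))
          from by ring, eq_div_iff hden]
      linear_combination h0
    · intro h
      funext i
      fin_cases i
      · simp [dispH, Matrix.mulVec, dotProduct, Fin.sum_univ_two, h]
        rw [show ((ω : ℂ) ^ 2 - (c1 : ℂ)) / ((v11 : ℂ) * (Complex.exp (Complex.I * θ) + 1)) * A 0
            = (((ω : ℂ) ^ 2 - (c1 : ℂ)) * A 0) / ((v11 : ℂ) * (Complex.exp (Complex.I * θ) + 1))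
            from by ring, mul_div_cancel₀ _ hden]
        ring
      · simp [dispH, Matrix.mulVec, dotProduct, Fin.sum_univ_two, h]
        have key : ((ω : ℂ) ^ 2 - (c2 : ℂ)) *
            (((ω : ℂ) ^ 2 - (c1 : ℂ)) / ((v11 : ℂ) * (Complex.exp (Complex.I * θ) + 1))) =
            (v21 : ℂ) * (Complex.exp (-(Complex.I * θ)) + 1) := by
          rw [mul_div_assoc', div_eq_iff hden]
          linear_combination KC
        linear_combination (-A 0) * key
end

section
/- For every θ ∈ ℝ, the functions ω₊ and ω₋ are differentiable at θ, with derivatives ω₊′(θ) = −v₁₁v₂₁ sin θ / (ω₊(θ)(2ω₊(θ)² − c₁ − c₂)) and ω₋′(θ) = −v₁₁v₂₁ sin θ / (ω₋(θ)(2ω₋(θ)² − c₁ − c₂)); in particular the denominators ω₊(θ)(2ω₊(θ)² − c₁ − c₂) and ω₋(θ)(2ω₋(θ)² − c₁ − c₂) are nonzero. -/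
theorem group_velocities (v11 v21 c1 c2 : ℝ)
    (hv : v11 * v21 > 0) (hsum : c1 + c2 > 0) (hprod : c1 * c2 > 4 * (v11 * v21))
    (hlt : c2 > c1) (θ : ℝ) :
    omegaP v11 v21 c1 c2 θ * (2 * (omegaP v11 v21 c1 c2 θ) ^ 2 - c1 - c2) ≠ 0 ∧
    omegaM v11 v21 c1 c2 θ * (2 * (omegaM v11 v21 c1 c2 θ) ^ 2 - c1 - c2) ≠ 0 ∧
    HasDerivAt (omegaP v11 v21 c1 c2)
      (-(v11 * v21 * Real.sin θ) /
        (omegaP v11 v21 c1 c2 θ * (2 * (omegaP v11 v21 c1 c2 θ) ^ 2 - c1 - c2))) θ ∧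
    HasDerivAt (omegaM v11 v21 c1 c2)
      (-(v11 * v21 * Real.sin θ) /
        (omegaM v11 v21 c1 c2 θ * (2 * (omegaM v11 v21 c1 c2 θ) ^ 2 - c1 - c2))) θ := by
  have hcos1 : -1 ≤ Real.cos θ := Real.neg_one_le_cos θ
  have hcos2 : Real.cos θ ≤ 1 := Real.cos_le_one θ
  set D : ℝ := (c1 - c2) ^ 2 + 8 * v11 * v21 * (Real.cos θ + 1) with hDdef
  have hD : 0 < D := by
    have h1 : (0:ℝ) < (c1 - c2) ^ 2 := by
      have : c1 - c2 ≠ 0 := by linarith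
      positivity
    nlinarith
  set s : ℝ := Real.sqrt D with hsdef
  have hs : 0 < s := Real.sqrt_pos.mpr hD
  have hs2 : s ^ 2 = D := Real.sq_sqrt hD.le
  have hslt : s < c1 + c2 := by nlinarith
  have hfP : 0 < (c1 + c2 + s) / 2 := by linarith
  have hfM : 0 < (c1 + c2 - s) / 2 := by linarith
  have hPdef : omegaP v11 v21 c1 c2 θ = Real.sqrt ((c1 + c2 + s) / 2) := rfl
  have hMdef : omegaM v11 v21 c1 c2 θ = Real.sqrt ((c1 + c2 - s) / 2) := rfl
  have hP : 0 < omegaP v11 v21 c1 c2 θ := by rw [hPdef]; exact Real.sqrt_pos.mpr hfP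
  have hM : 0 < omegaM v11 v21 c1 c2 θ := by rw [hMdef]; exact Real.sqrt_pos.mpr hfM
  have hP2 : (omegaP v11 v21 c1 c2 θ) ^ 2 = (c1 + c2 + s) / 2 := by
    rw [hPdef]; exact Real.sq_sqrt hfP.le
  have hM2 : (omegaM v11 v21 c1 c2 θ) ^ 2 = (c1 + c2 - s) / 2 := by
    rw [hMdef]; exact Real.sq_sqrt hfM.le
  have hPs : 2 * (omegaP v11 v21 c1 c2 θ) ^ 2 - c1 - c2 = s := by rw [hP2]; ring
  have hMs : 2 * (omegaM v11 v21 c1 c2 θ) ^ 2 - c1 - c2 = -s := by rw [hM2]; ring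
  have hg : HasDerivAt (fun t => (c1 - c2) ^ 2 + 8 * v11 * v21 * (Real.cos t + 1))
      (8 * v11 * v21 * (-Real.sin θ)) θ := by
    have h := (((Real.hasDerivAt_cos θ).add_const 1).const_mul (8 * v11 * v21)).const_add
      ((c1 - c2) ^ 2)
    simpa [mul_comm] using h
  have hgs : HasDerivAt (fun t => Real.sqrt ((c1 - c2) ^ 2 + 8 * v11 * v21 * (Real.cos t + 1)))
      (8 * v11 * v21 * (-Real.sin θ) / (2 * s)) θ := hg.sqrt hD.ne'
  have hdP : HasDerivAt (omegaP v11 v21 c1 c2)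
      ((8 * v11 * v21 * (-Real.sin θ) / (2 * s) / 2) / (2 * Real.sqrt ((c1 + c2 + s) / 2))) θ := by
    have h := ((hgs.const_add (c1 + c2)).div_const 2).sqrt hfP.ne'
    exact h
  have hdM : HasDerivAt (omegaM v11 v21 c1 c2)
      ((-(8 * v11 * v21 * (-Real.sin θ) / (2 * s)) / 2) / (2 * Real.sqrt ((c1 + c2 - s) / 2))) θ :=
    ((hgs.const_sub (c1 + c2)).div_const 2).sqrt hfM.ne'
  have hsqP : Real.sqrt ((c1 + c2 + s) / 2) ≠ 0 := (Real.sqrt_pos.mpr hfP).ne'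
  have hsqM : Real.sqrt ((c1 + c2 - s) / 2) ≠ 0 := (Real.sqrt_pos.mpr hfM).ne'
  refine ⟨?_, ?_, ?_, ?_⟩
  · rw [hPs]; exact (mul_pos hP hs).ne'
  · rw [hMs]; exact (mul_neg_of_pos_of_neg hM (by linarith)).ne
  · convert hdP using 1
    rw [hPs, hPdef]
    field_simp
    ring
  · convert hdM using 1
    rw [hMs, hMdef]
    field_simp
    ring
end

section
/- An optical wave cannot generate an acoustical wave by self-interaction: for every θ ∈ ℝ one has 2ω₊(θ) ≠ ω₋(2θ). -/
theorem optical_cannot_generate_acoustical (v11 v21 c1 c2 : ℝ)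
    (hv : v11 * v21 > 0) (hsum : c1 + c2 > 0) (hprod : c1 * c2 > 4 * (v11 * v21))
    (hlt : c2 > c1) (θ : ℝ) :
    2 * omegaP v11 v21 c1 c2 θ ≠ omegaM v11 v21 c1 c2 (2 * θ) := by
  set s := Real.sqrt ((c1 + c2) / 2) with hs
  have hspos : 0 < s := Real.sqrt_pos.mpr (by linarith)
  have hP : s ≤ omegaP v11 v21 c1 c2 θ := by
    apply Real.sqrt_le_sqrt
    have := Real.sqrt_nonneg ((c1 - c2) ^ 2 + 8 * v11 * v21 * (Real.cos θ + 1))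
    linarith
  have hM : omegaM v11 v21 c1 c2 (2 * θ) ≤ s := by
    apply Real.sqrt_le_sqrt
    have := Real.sqrt_nonneg ((c1 - c2) ^ 2 + 8 * v11 * v21 * (Real.cos (2 * θ) + 1))
    linarith
  intro h
  have : 2 * omegaP v11 v21 c1 c2 θ ≥ 2 * s := by linarith
  linarith
end

section
/- An optical wave cannot generate another optical wave by self-interaction, i.e. an optical wave is closed under self-interaction of order 2: for every θ ∈ ℝ one has 2ω₊(θ) ≠ ω₊(2θ). -/
theorem optical_closed_under_self_interaction (v11 v21 c1 c2 : ℝ)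
    (hv : v11 * v21 > 0) (hsum : c1 + c2 > 0) (hprod : c1 * c2 > 4 * (v11 * v21))
    (hlt : c2 > c1) (θ : ℝ) :
    2 * omegaP v11 v21 c1 c2 θ ≠ omegaP v11 v21 c1 c2 (2 * θ) := by
  unfold omegaP
  set D1 := (c1 - c2) ^ 2 + 8 * v11 * v21 * (Real.cos θ + 1) with hD1
  set D2 := (c1 - c2) ^ 2 + 8 * v11 * v21 * (Real.cos (2 * θ) + 1) with hD2
  have hs1 : (0:ℝ) ≤ Real.sqrt D1 := Real.sqrt_nonneg _
  have hs2lt : Real.sqrt D2 < c1 + c2 := by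
    rw [Real.sqrt_lt' hsum, hD2]
    nlinarith [Real.cos_le_one (2 * θ)]
  have hA : (0:ℝ) ≤ (c1 + c2 + Real.sqrt D1) / 2 := by linarith
  have hB : (0:ℝ) ≤ (c1 + c2 + Real.sqrt D2) / 2 := by
    have := Real.sqrt_nonneg D2; linarith
  have h4 : Real.sqrt 4 = 2 := by
    rw [show (4:ℝ) = 2 ^ 2 by norm_num, Real.sqrt_sq (by norm_num)]
  have h2 : 2 * Real.sqrt ((c1 + c2 + Real.sqrt D1) / 2)
      = Real.sqrt (4 * ((c1 + c2 + Real.sqrt D1) / 2)) := by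
    rw [Real.sqrt_mul (by norm_num : (0:ℝ) ≤ 4), h4]
  have hlt' : Real.sqrt ((c1 + c2 + Real.sqrt D2) / 2)
      < Real.sqrt (4 * ((c1 + c2 + Real.sqrt D1) / 2)) := by
    apply Real.sqrt_lt_sqrt hB
    linarith
  rw [h2]
  exact fun h => absurd h.symm (ne_of_lt hlt')
end

section
/- Let θ ∈ ℝ and set c := (cos θ + 1)/2, d₁ := (c₁ + c₂)²/(16v₁₁v₂₁) and d₂ := (c₁ − c₂)²/(16v₁₁v₂₁). Then the acoustical-to-optical resonance condition 2ω₋(θ) = ω₊(2θ) holds if and only if 9d₁ = 17d₂ + 16c + (2c − 1)² + 8√(d₂ + c)·√(d₂ + (2c − 1)²). -/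
theorem acoustical_to_optical_resonance_condition (v11 v21 c1 c2 : ℝ)
    (hv : v11 * v21 > 0) (hsum : c1 + c2 > 0) (hprod : c1 * c2 > 4 * (v11 * v21))
    (hlt : c2 > c1) (θ : ℝ)
    (c d1 d2 : ℝ)
    (hc : c = (Real.cos θ + 1) / 2)
    (hd1 : d1 = (c1 + c2) ^ 2 / (16 * v11 * v21))
    (hd2 : d2 = (c1 - c2) ^ 2 / (16 * v11 * v21)) :
    2 * omegaM v11 v21 c1 c2 θ = omegaP v11 v21 c1 c2 (2 * θ) ↔
      9 * d1 = 17 * d2 + 16 * c + (2 * c - 1) ^ 2 +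
        8 * Real.sqrt (d2 + c) * Real.sqrt (d2 + (2 * c - 1) ^ 2) := by
  have hW0 : (0 : ℝ) < 16 * (v11 * v21) := by positivity
  set W : ℝ := 16 * (v11 * v21) with hW
  have hWne : W ≠ 0 := ne_of_gt hW0
  set S := c1 + c2 with hS
  set a := (c1 - c2) ^ 2 + W * c with ha
  set b := (c1 - c2) ^ 2 + W * (2 * c - 1) ^ 2 with hb
  have hc0 : 0 ≤ c := by
    have := Real.neg_one_le_cos θ; rw [hc]; linarith
  have hc1 : c ≤ 1 := by
    have := Real.cos_le_one θ; rw [hc]; linarith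
  have ha0 : 0 ≤ a := by positivity
  have hb0 : 0 ≤ b := by positivity
  have haS : a ≤ S ^ 2 := by
    have h1 : S ^ 2 = (c1 - c2) ^ 2 + 4 * (c1 * c2) := by ring
    have h2 : W * c ≤ W := by nlinarith
    rw [h1, ha]; rw [hW] at h2 ⊢; nlinarith
  have hsa : Real.sqrt a ≤ S := by
    calc Real.sqrt a ≤ Real.sqrt (S ^ 2) := Real.sqrt_le_sqrt haS
    _ = S := Real.sqrt_sq hsum.le
  -- rewrite the dispersion arguments
  have e1 : (c1 - c2) ^ 2 + 8 * v11 * v21 * (Real.cos θ + 1) = a := by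
    rw [ha, hW, hc]; ring
  have e2 : (c1 - c2) ^ 2 + 8 * v11 * v21 * (Real.cos (2 * θ) + 1) = b := by
    have hcos : Real.cos θ = 2 * c - 1 := by rw [hc]; ring
    rw [hb, hW, Real.cos_two_mul, hcos]; ring
  rw [omegaM, omegaP, e1, e2]
  -- step 1: remove outer square roots
  have hsb0 : 0 ≤ Real.sqrt b := Real.sqrt_nonneg b
  have hsa0 : 0 ≤ Real.sqrt a := Real.sqrt_nonneg a
  have step1 : 2 * Real.sqrt ((S - Real.sqrt a) / 2) =
      Real.sqrt ((S + Real.sqrt b) / 2) ↔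
      3 * S = 4 * Real.sqrt a + Real.sqrt b := by
    have h4 : (2 : ℝ) * Real.sqrt ((S - Real.sqrt a) / 2) =
        Real.sqrt (4 * ((S - Real.sqrt a) / 2)) := by
      rw [show (4 : ℝ) = 2 ^ 2 by norm_num, Real.sqrt_mul (by positivity),
        Real.sqrt_sq (by norm_num : (0:ℝ) ≤ 2)]
    rw [h4, Real.sqrt_inj (by linarith) (by linarith)]
    constructor <;> intro h <;> linarith
  rw [step1]
  -- step 2: square both sides
  have step2 : 3 * S = 4 * Real.sqrt a + Real.sqrt b ↔
      9 * S ^ 2 = 16 * a + b + 8 * (Real.sqrt a * Real.sqrt b) := by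
    rw [show (9 : ℝ) * S ^ 2 = (3 * S) ^ 2 by ring,
      ← (sq_eq_sq₀ (by linarith) (by positivity) :
        (3 * S) ^ 2 = (4 * Real.sqrt a + Real.sqrt b) ^ 2 ↔ _)]
    constructor <;> intro h
    · rw [h]; linear_combination 16 * Real.sq_sqrt ha0 + Real.sq_sqrt hb0
    · rw [h]; linear_combination -(16 * Real.sq_sqrt ha0) - Real.sq_sqrt hb0
  rw [step2]
  -- step 3: translate to d1, d2
  have hd1' : d1 * W = S ^ 2 := by
    rw [hd1, hW, hS]
    rw [show 16 * v11 * v21 = 16 * (v11 * v21) by ring]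
    exact div_mul_cancel₀ _ hWne
  have hd2' : d2 * W = (c1 - c2) ^ 2 := by
    rw [hd2, hW]
    rw [show 16 * v11 * v21 = 16 * (v11 * v21) by ring]
    exact div_mul_cancel₀ _ hWne
  have eda : d2 + c = a / W := by
    rw [eq_div_iff hWne]; linear_combination hd2'
  have edb : d2 + (2 * c - 1) ^ 2 = b / W := by
    rw [eq_div_iff hWne]; linear_combination hd2'
  have hWW : Real.sqrt W * Real.sqrt W = W := Real.mul_self_sqrt hW0.le
  have esq : 8 * Real.sqrt (d2 + c) * Real.sqrt (d2 + (2 * c - 1) ^ 2) =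
      8 * (Real.sqrt a * Real.sqrt b) / W := by
    rw [eda, edb, Real.sqrt_div ha0, Real.sqrt_div hb0]
    calc 8 * (Real.sqrt a / Real.sqrt W) * (Real.sqrt b / Real.sqrt W)
        = 8 * (Real.sqrt a * Real.sqrt b) / (Real.sqrt W * Real.sqrt W) := by ring
      _ = 8 * (Real.sqrt a * Real.sqrt b) / W := by rw [hWW]
  rw [esq]
  have hmid : (16 * a + b) / W = 17 * d2 + 16 * c + (2 * c - 1) ^ 2 := by
    rw [div_eq_iff hWne]; linear_combination (-17) * hd2'
  have hleft : 9 * S ^ 2 / W = 9 * d1 := by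
    rw [div_eq_iff hWne]; linear_combination (-9) * hd1'
  constructor <;> intro h
  · calc 9 * d1 = 9 * S ^ 2 / W := hleft.symm
      _ = (16 * a + b + 8 * (Real.sqrt a * Real.sqrt b)) / W := by rw [h]
      _ = (16 * a + b) / W + 8 * (Real.sqrt a * Real.sqrt b) / W := by ring
      _ = 17 * d2 + 16 * c + (2 * c - 1) ^ 2
          + 8 * (Real.sqrt a * Real.sqrt b) / W := by rw [hmid]
  · have h2 : 9 * S ^ 2 = (17 * d2 + 16 * c + (2 * c - 1) ^ 2) * W
        + 8 * (Real.sqrt a * Real.sqrt b) := by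
      calc 9 * S ^ 2 = 9 * (d1 * W) := by rw [hd1']
        _ = 9 * d1 * W := by ring
        _ = (17 * d2 + 16 * c + (2 * c - 1) ^ 2
              + 8 * (Real.sqrt a * Real.sqrt b) / W) * W := by rw [h]
        _ = (17 * d2 + 16 * c + (2 * c - 1) ^ 2) * W
              + 8 * (Real.sqrt a * Real.sqrt b) / W * W := by ring
        _ = _ := by rw [div_mul_cancel₀ _ hWne]
    have h3 : 16 * a + b = (17 * d2 + 16 * c + (2 * c - 1) ^ 2) * W := by
      linear_combination (-17) * hd2'
    linarith [h2, h3]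
end

section
/- An acoustical wave can generate an optical wave by self-interaction: for every a > 0 and γ > 1, setting δ := (γ − 1)²/(4γ), and for every c ∈ [0, 1] with 16c > 9 − 8δ, there exists b > 0 such that, with the parameters v₁₁ = a, v₂₁ = γa, c₁ = 2a + b, c₂ = 2γa + b and with θ := arccos(2c − 1) ∈ [0, π], one has 2ω₋(θ) = ω₊(2θ). -/
theorem acoustical_generates_optical (a γ : ℝ) (ha : a > 0) (hγ : γ > 1)
    (δ : ℝ) (hδ : δ = (γ - 1) ^ 2 / (4 * γ))
    (c : ℝ) (hc : c ∈ Set.Icc (0 : ℝ) 1) (hres : 16 * c > 9 - 8 * δ) :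
    ∃ b > (0 : ℝ),
      2 * omegaM a (γ * a) (2 * a + b) (2 * γ * a + b) (Real.arccos (2 * c - 1)) =
        omegaP a (γ * a) (2 * a + b) (2 * γ * a + b) (2 * Real.arccos (2 * c - 1)) := by
  obtain ⟨hc0, hc1⟩ := hc
  have hγ0 : (0:ℝ) < γ := by linarith
  set P := Real.sqrt ((γ-1)^2 + 4*γ*c) with hPdef
  set Q := Real.sqrt ((γ-1)^2 + 4*γ*(2*c-1)^2) with hQdef
  have hPa : (0:ℝ) ≤ (γ-1)^2 + 4*γ*c := by nlinarith [sq_nonneg (γ-1)]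
  have hQa : (0:ℝ) ≤ (γ-1)^2 + 4*γ*(2*c-1)^2 := by positivity
  have hP2 : P^2 = (γ-1)^2 + 4*γ*c := Real.sq_sqrt hPa
  have hQ2 : Q^2 = (γ-1)^2 + 4*γ*(2*c-1)^2 := Real.sq_sqrt hQa
  have hP0 : 0 ≤ P := Real.sqrt_nonneg _
  have hQ0 : 0 ≤ Q := Real.sqrt_nonneg _
  have hδ' : 4*γ*δ = (γ-1)^2 := by rw [hδ]; field_simp
  have hsq : (3*(1+γ))^2 < (4*P+Q)^2 := by
    nlinarith [mul_nonneg hP0 hQ0, mul_nonneg hγ0.le (sq_nonneg (2*c-1)),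
      mul_pos hγ0 (show (0:ℝ) < 16*c - (9 - 8*δ) by linarith)]
  have hkey : 3*(1+γ) < 4*P+Q := by
    have hb := lt_of_pow_lt_pow_left₀ 2 (by linarith : (0:ℝ) ≤ 4*P+Q) hsq
    exact hb
  have hpos : 0 < 4*P+Q-3*(1+γ) := by linarith
  refine ⟨a*(4*P+Q-3*(1+γ))/3, by positivity, ?_⟩
  set b := a*(4*P+Q-3*(1+γ))/3 with hbdef
  have hcos : Real.cos (Real.arccos (2*c-1)) = 2*c-1 :=
    Real.cos_arccos (by linarith) (by linarith)
  unfold omegaM omegaP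
  rw [Real.cos_two_mul, hcos]
  have e1 : (2*a+b - (2*γ*a+b))^2 + 8*a*(γ*a)*((2*c-1)+1) = (2*a*P)^2 := by
    rw [mul_pow, mul_pow, hP2]; ring
  have e2 : (2*a+b - (2*γ*a+b))^2 + 8*a*(γ*a)*((2*(2*c-1)^2-1)+1) = (2*a*Q)^2 := by
    rw [mul_pow, mul_pow, hQ2]; ring
  rw [e1, e2, Real.sqrt_sq (by positivity), Real.sqrt_sq (by positivity)]
  have e3 : (2*a+b + (2*γ*a+b) - 2*a*P)/2 = a*(P+Q)/3 := by rw [hbdef]; ring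
  have e4 : (2*a+b + (2*γ*a+b) + 2*a*Q)/2 = 4*(a*(P+Q)/3) := by rw [hbdef]; ring
  rw [e3, e4, show (4:ℝ)*(a*(P+Q)/3) = 2^2*(a*(P+Q)/3) by ring,
    Real.sqrt_mul (by positivity), Real.sqrt_sq (by norm_num)]
end

section
/- In the specialized chain with v₁₁ = a, v₂₁ = γa, c₁ = 2a + b, c₂ = 2γa + b, where a > 0, γ > 1, b > 0, an acoustical wave cannot generate another acoustical wave by self-interaction: for every θ ∈ ℝ one has 2ω₋(θ) ≠ ω₋(2θ). -/
set_option maxHeartbeats 1000000 in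
private lemma aux_contradiction (a γ b x s1 s2 : ℝ)
    (ha : 0 < a) (hγ : 1 < γ) (hb : 0 < b)
    (hx1 : -1 ≤ x) (hx2 : x ≤ 1) (hs1nn : 0 ≤ s1) (hs2nn : 0 ≤ s2)
    (hs1sq : s1^2 = 4*a^2*(γ^2+2*γ*x+1))
    (hs2sq : s2^2 = 4*a^2*((γ-1)^2+4*γ*x^2))
    (key : 4*s1 = 6*a + 6*γ*a + 6*b + s2) : False := by
  have hg0 : (0:ℝ) < γ := by linarith
  rcases le_or_gt (4*s1) (6*a + 6*γ*a) with hcase | hcase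
  · linarith
  · have hT0 : (0:ℝ) < 6*a + 6*γ*a := by positivity
    have hprod : 0 < (4*s1 - (6*a + 6*γ*a)) * (4*s1 + (6*a + 6*γ*a)) :=
      mul_pos (by linarith) (by linarith)
    have h16 : 36*(a + γ*a)^2 < 16*s1^2 := by nlinarith [hprod]
    rw [hs1sq] at h16
    clear hprod hT0
    have hcc : 32*γ*x > -7*γ^2+18*γ-7 := by
      nlinarith [h16, mul_pos ha ha]
    have hq : 0 ≤ 12*(1+γ^2) - γ*(x^2-14*x+25) := by
      clear h16 hs1sq hs2sq key hcase hs1nn hs2nn hb ha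
      rcases le_or_gt γ 3 with hγ3 | hγ3
      · have hcpos : (0:ℝ) < 32*γ*x + 7*γ^2 - 18*γ + 7 := by linarith
        have hupper : (0:ℝ) ≤ 14*γ^2+412*γ+14 - (32*γ*x + 7*γ^2 - 18*γ + 7) := by
          linarith [mul_nonneg hg0.le (by linarith : (0:ℝ) ≤ 1 - x), mul_pos hg0 hg0]
        have hG0 : (0:ℝ) ≤ -49*γ^4+9404*γ^3-17958*γ^2+9404*γ-49 := by
          nlinarith [mul_nonneg (by linarith : (0:ℝ) ≤ γ - 1) (by linarith : (0:ℝ) ≤ 3 - γ),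
            mul_nonneg (mul_nonneg (by linarith : (0:ℝ) ≤ γ - 1) (by linarith : (0:ℝ) ≤ 3 - γ)) hg0.le,
            mul_nonneg (mul_nonneg (mul_nonneg (by linarith : (0:ℝ) ≤ γ - 1) (by linarith : (0:ℝ) ≤ 3 - γ)) hg0.le) hg0.le,
            sq_nonneg (γ-1), sq_nonneg (γ-3)]
        have h' : 0 ≤ 1024*γ*(12*(1+γ^2) - γ*(x^2-14*x+25)) := by
          linarith [mul_nonneg hcpos.le hupper, hG0]
        by_contra hq'
        push_neg at hq'
        linarith [h', mul_pos hg0 (neg_pos.mpr hq')]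
      · nlinarith [mul_nonneg (mul_nonneg hg0.le (by linarith : (0:ℝ) ≤ 1+x))
          (by linarith : (0:ℝ) ≤ 15 - x),
          mul_nonneg (by linarith : (0:ℝ) ≤ γ - 3) (by linarith : (0:ℝ) ≤ 3*γ - 1)]
    clear hcc h16
    have hm : 0 < 6*γ^2+5*γ+6+8*γ*x-γ*x^2 := by
      nlinarith [mul_pos hg0 hg0,
        mul_nonneg hg0.le (mul_nonneg (by linarith : (0:ℝ) ≤ 1+x) (by linarith : (0:ℝ) ≤ 9-x))]
    have hR : (6*γ^2+5*γ+6+8*γ*x-γ*x^2)^2 ≤ 36*(1+γ)^2*(γ^2+2*γ*x+1) := by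
      linarith [mul_nonneg (mul_nonneg hg0.le (sq_nonneg (1-x))) hq]
    clear hq
    have hstep : a*(6*γ^2+5*γ+6+8*γ*x-γ*x^2) ≤ 3*(1+γ)*s1 := by
      by_contra hst
      push_neg at hst
      have hss : 0 ≤ 3*(1+γ)*s1 := mul_nonneg (by linarith) hs1nn
      have h1 : 0 < (a*(6*γ^2+5*γ+6+8*γ*x-γ*x^2) - 3*(1+γ)*s1) *
          (a*(6*γ^2+5*γ+6+8*γ*x-γ*x^2) + 3*(1+γ)*s1) :=
        mul_pos (by linarith) (by nlinarith [mul_pos ha hm])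
      nlinarith [h1, hs1sq, mul_le_mul_of_nonneg_left hR (mul_pos ha ha).le]
    clear hR hm
    have hr : (4*s1 - (6*a + 6*γ*a))^2 ≤ s2^2 := by
      nlinarith [hs2sq, hs1sq, mul_nonneg ha.le (sub_nonneg.mpr hstep)]
    have hfin : 4*s1 - (6*a + 6*γ*a) ≤ s2 := by
      by_contra hf
      push_neg at hf
      have h2 : 0 < (4*s1 - (6*a + 6*γ*a) - s2) * (4*s1 - (6*a + 6*γ*a) + s2) :=
        mul_pos (by linarith) (by linarith)
      nlinarith [h2, hr]
    linarith

set_option maxHeartbeats 800000 in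
theorem acoustical_cannot_generate_acoustical (a γ b : ℝ)
    (ha : a > 0) (hγ : γ > 1) (hb : b > 0) (θ : ℝ) :
    2 * omegaM a (γ * a) (2 * a + b) (2 * γ * a + b) θ ≠
      omegaM a (γ * a) (2 * a + b) (2 * γ * a + b) (2 * θ) := by
  intro h
  have hg0 : (0:ℝ) < γ := by linarith
  unfold omegaM at h
  rw [Real.cos_two_mul] at h
  set x := Real.cos θ with hxdef
  have hx1 : -1 ≤ x := Real.neg_one_le_cos θ
  have hx2 : x ≤ 1 := Real.cos_le_one θ
  clear_value x
  have e1 : (2 * a + b - (2 * γ * a + b)) ^ 2 + 8 * a * (γ * a) * (x + 1)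
      = 4*a^2*(γ^2+2*γ*x+1) := by ring
  have e2 : (2 * a + b - (2 * γ * a + b)) ^ 2 + 8 * a * (γ * a) * (2 * x ^ 2 - 1 + 1)
      = 4*a^2*((γ-1)^2+4*γ*x^2) := by ring
  rw [e1, e2] at h
  set s1 := Real.sqrt (4*a^2*(γ^2+2*γ*x+1)) with hs1def
  set s2 := Real.sqrt (4*a^2*((γ-1)^2+4*γ*x^2)) with hs2def
  have hu2 : 0 ≤ γ^2+2*γ*x+1 := by nlinarith [sq_nonneg (γ+x)]
  have hs1nn : 0 ≤ s1 := Real.sqrt_nonneg _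
  have hs2nn : 0 ≤ s2 := Real.sqrt_nonneg _
  have hs1sq : s1^2 = 4*a^2*(γ^2+2*γ*x+1) :=
    Real.sq_sqrt (mul_nonneg (by positivity) hu2)
  have hs2sq : s2^2 = 4*a^2*((γ-1)^2+4*γ*x^2) :=
    Real.sq_sqrt (mul_nonneg (by positivity) (by positivity))
  clear_value s1 s2
  have hSpos : (0:ℝ) < 2*a+b+(2*γ*a+b) := by nlinarith
  have hx2' : (0:ℝ) ≤ 1 - x^2 := by nlinarith
  have hgap1 : s1^2 < (2*a+b+(2*γ*a+b))^2 := by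
    rw [hs1sq]
    linarith [mul_pos hb hb, mul_pos ha hb, mul_pos (mul_pos hg0 ha) hb,
      mul_nonneg (mul_nonneg hg0.le (mul_pos ha ha).le) (by linarith : (0:ℝ) ≤ 1 - x)]
  have hgap2 : s2^2 < (2*a+b+(2*γ*a+b))^2 := by
    rw [hs2sq]
    linarith [mul_pos hb hb, mul_pos ha hb, mul_pos (mul_pos hg0 ha) hb,
      mul_nonneg (mul_nonneg hg0.le (mul_pos ha ha).le) hx2']
  have hs1lt : s1 < 2*a+b+(2*γ*a+b) := by
    by_contra hle
    push_neg at hle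
    nlinarith [mul_le_mul hle hle hSpos.le hs1nn]
  have hs2lt : s2 < 2*a+b+(2*γ*a+b) := by
    by_contra hle
    push_neg at hle
    nlinarith [mul_le_mul hle hle hSpos.le hs2nn]
  have hA : 0 ≤ (2*a+b+(2*γ*a+b) - s1)/2 := by linarith
  have hB : 0 ≤ (2*a+b+(2*γ*a+b) - s2)/2 := by linarith
  have h4 : 4*((2*a+b+(2*γ*a+b) - s1)/2) = (2*a+b+(2*γ*a+b) - s2)/2 := by
    have h1 : (2*Real.sqrt ((2*a+b+(2*γ*a+b) - s1)/2))^2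
        = (Real.sqrt ((2*a+b+(2*γ*a+b) - s2)/2))^2 := by rw [h]
    rw [mul_pow, Real.sq_sqrt hA, Real.sq_sqrt hB] at h1
    linarith
  clear h hxdef hs1def hs2def
  have key : 4*s1 = 6*a + 6*γ*a + 6*b + s2 := by linarith
  exact aux_contradiction a γ b x s1 s2 ha hγ hb hx1 hx2 hs1nn hs2nn hs1sq hs2sq key
end

section
/- For every δ > 0 and every real c with max{0, (5 − √(15δ + 24))/2} ≤ c ≤ 1, one has 8δ − 9 + 16c + (2c − 1)² ≤ 8√(δ + c)·√(δ + (2c − 1)²). -/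
theorem acoustical_resonance_inequality (δ c : ℝ) (hδ : δ > 0)
    (hc1 : max 0 ((5 - Real.sqrt (15 * δ + 24)) / 2) ≤ c) (hc2 : c ≤ 1) :
    8 * δ - 9 + 16 * c + (2 * c - 1) ^ 2 ≤
      8 * Real.sqrt (δ + c) * Real.sqrt (δ + (2 * c - 1) ^ 2) := by
  have hc0 : (0 : ℝ) ≤ c := le_trans (le_max_left _ _) hc1
  set sA := Real.sqrt (δ + c) with hsAdef
  set sB := Real.sqrt (δ + (2 * c - 1) ^ 2) with hsBdef
  have hA : sA ^ 2 = δ + c := Real.sq_sqrt (by positivity)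
  have hB : sB ^ 2 = δ + (2 * c - 1) ^ 2 := Real.sq_sqrt (by positivity)
  have hsA : 0 ≤ sA := Real.sqrt_nonneg _
  have hsB : 0 ≤ sB := Real.sqrt_nonneg _
  rcases le_or_gt (8 * δ - 9 + 16 * c + (2 * c - 1) ^ 2) 0 with h | h
  · exact h.trans (by positivity)
  · have hkey : c ^ 2 - 8 * c + 4 ≤ 12 * δ := by
      rcases le_or_gt c (4 / 7) with hc | hc
      · nlinarith [mul_nonneg hc0 (sub_nonneg.mpr hc)]
      · nlinarith [mul_nonneg (le_of_lt (by linarith : (0:ℝ) < c - 4/7)) (sub_nonneg.mpr hc2)]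
    nlinarith [sq_nonneg (sA - sB), sq_nonneg (sA + sB), mul_nonneg hsA hsB,
      mul_nonneg (sq_nonneg (1 - c)) (by linarith : (0:ℝ) ≤ 12 * δ - (c ^ 2 - 8 * c + 4)),
      mul_nonneg (mul_nonneg hsA hsB) (le_of_lt h),
      sq_nonneg (sA * sB)]
end

section
/- No wave triple resonance of the form ω₋ + ω₊ = ω₊ occurs: for every θ ∈ ℝ one has ω₋(θ) + ω₊(2θ) ≠ ω₊(3θ). -/
/-!
With `v = v₁₁v₂₁`, `S = c₁ + c₂` and `D(φ) = (c₁ - c₂)² + 16 v cos²(φ/2)`, one has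
`ω₊(φ)² - ω₊(ψ)² = (√D(φ) - √D(ψ)) / 2`, and `cos_sub_cos` together with
`√D(φ) ≥ 4√v |cos(φ/2)|` gives `√D(φ) - √D(ψ) ≤ 4√v |sin((φ - ψ)/2)|`.
On the other hand `ω₋(θ)² ω₊(θ)² = c₁c₂ - 4v cos²(θ/2) > 4v sin²(θ/2)`, because `c₁c₂ > 4v`,
and `ω₊(θ) ≤ ω₊(2θ) + ω₊(3θ)` since `ω₊² ∈ [S/2, S]`. Hence
`ω₊(3θ)² - ω₊(2θ)² ≤ 2√v |sin(θ/2)| < ω₋(θ) ω₊(θ) ≤ ω₋(θ) (ω₊(2θ) + ω₊(3θ))`,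
that is `ω₊(3θ) < ω₋(θ) + ω₊(2θ)`.
-/

open Real

noncomputable def diatomicDisc (v11 v21 c1 c2 θ : ℝ) : ℝ :=
  (c1 - c2) ^ 2 + 8 * v11 * v21 * (cos θ + 1)

theorem cos_sq_half (x : ℝ) : cos (x / 2) ^ 2 = 1 / 2 + cos x / 2 := by
  rw [cos_sq, mul_div_cancel₀ x two_ne_zero]

theorem sub_le_of_sq_sub_sq_le_add_mul {a b t : ℝ} (hb : 0 ≤ b) (ht : 0 ≤ t)
    (h : a ^ 2 - b ^ 2 ≤ (a + b) * t) : a - b ≤ t := by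
  nlinarith

theorem abs_sin_add_le_abs_cos_add_abs_cos (x y : ℝ) : |sin (x + y)| ≤ |cos x| + |cos y| := by
  calc |sin (x + y)| = |sin x * cos y + cos x * sin y| := by rw [sin_add]
    _ ≤ |sin x| * |cos y| + |cos x| * |sin y| := by
        simpa only [abs_mul] using abs_add_le (sin x * cos y) (cos x * sin y)
    _ ≤ 1 * |cos y| + |cos x| * 1 := by
        gcongr
        · exact abs_sin_le_one x
        · exact abs_sin_le_one y
    _ = |cos x| + |cos y| := by ring

theorem omegaP_nonneg (v11 v21 c1 c2 θ : ℝ) : 0 ≤ omegaP v11 v21 c1 c2 θ := sqrt_nonneg _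

theorem omegaM_nonneg (v11 v21 c1 c2 θ : ℝ) : 0 ≤ omegaM v11 v21 c1 c2 θ := sqrt_nonneg _

section DiatomicChain

variable {v11 v21 c1 c2 : ℝ}

theorem omegaP_eq (θ : ℝ) :
    omegaP v11 v21 c1 c2 θ = √((c1 + c2 + √(diatomicDisc v11 v21 c1 c2 θ)) / 2) := rfl

theorem omegaM_eq (θ : ℝ) :
    omegaM v11 v21 c1 c2 θ = √((c1 + c2 - √(diatomicDisc v11 v21 c1 c2 θ)) / 2) := rfl

theorem diatomicDisc_eq_cos_half_sq (θ : ℝ) :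
    diatomicDisc v11 v21 c1 c2 θ = (c1 - c2) ^ 2 + 16 * (v11 * v21) * cos (θ / 2) ^ 2 := by
  rw [diatomicDisc, cos_sq_half]
  ring

theorem diatomicDisc_nonneg (hv : 0 ≤ v11 * v21) (θ : ℝ) : 0 ≤ diatomicDisc v11 v21 c1 c2 θ := by
  rw [diatomicDisc_eq_cos_half_sq]
  positivity

theorem diatomicDisc_le_sq (hv : 0 ≤ v11 * v21) (hprod : 4 * (v11 * v21) ≤ c1 * c2) (θ : ℝ) :
    diatomicDisc v11 v21 c1 c2 θ ≤ (c1 + c2) ^ 2 := by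
  rw [diatomicDisc]
  nlinarith [neg_one_le_cos θ, cos_le_one θ]

theorem diatomicDisc_sub_diatomicDisc (φ ψ : ℝ) :
    diatomicDisc v11 v21 c1 c2 φ - diatomicDisc v11 v21 c1 c2 ψ =
      -16 * (v11 * v21) * (sin ((φ + ψ) / 2) * sin ((φ - ψ) / 2)) := by
  rw [diatomicDisc, diatomicDisc]
  linear_combination 8 * (v11 * v21) * cos_sub_cos φ ψ

theorem four_mul_sqrt_mul_abs_cos_half_le_sqrt_diatomicDisc (hv : 0 ≤ v11 * v21) (θ : ℝ) :
    4 * √(v11 * v21) * |cos (θ / 2)| ≤ √(diatomicDisc v11 v21 c1 c2 θ) := by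
  apply le_sqrt_of_sq_le
  rw [mul_pow, mul_pow, sq_sqrt hv, sq_abs, diatomicDisc_eq_cos_half_sq]
  nlinarith [sq_nonneg (c1 - c2)]

theorem sqrt_diatomicDisc_sub_sqrt_diatomicDisc_le (hv : 0 ≤ v11 * v21) (φ ψ : ℝ) :
    √(diatomicDisc v11 v21 c1 c2 φ) - √(diatomicDisc v11 v21 c1 c2 ψ) ≤
      4 * √(v11 * v21) * |sin ((φ - ψ) / 2)| := by
  apply sub_le_of_sq_sub_sq_le_add_mul (sqrt_nonneg _) (by positivity)
  have hsin := abs_sin_add_le_abs_cos_add_abs_cos (φ / 2) (ψ / 2)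
  rw [← add_div] at hsin
  have hφ := four_mul_sqrt_mul_abs_cos_half_le_sqrt_diatomicDisc (c1 := c1) (c2 := c2) hv φ
  have hψ := four_mul_sqrt_mul_abs_cos_half_le_sqrt_diatomicDisc (c1 := c1) (c2 := c2) hv ψ
  set m := √(v11 * v21)
  calc √(diatomicDisc v11 v21 c1 c2 φ) ^ 2 - √(diatomicDisc v11 v21 c1 c2 ψ) ^ 2
      = -16 * m ^ 2 * (sin ((φ + ψ) / 2) * sin ((φ - ψ) / 2)) := by
        rw [sq_sqrt (diatomicDisc_nonneg hv φ), sq_sqrt (diatomicDisc_nonneg hv ψ), sq_sqrt hv,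
          diatomicDisc_sub_diatomicDisc]
    _ ≤ 16 * m ^ 2 * (|sin ((φ + ψ) / 2)| * |sin ((φ - ψ) / 2)|) := by
        rw [← abs_mul]
        nlinarith [neg_abs_le (sin ((φ + ψ) / 2) * sin ((φ - ψ) / 2)), sq_nonneg m]
    _ ≤ (4 * m * |cos (φ / 2)| + 4 * m * |cos (ψ / 2)|) * (4 * m * |sin ((φ - ψ) / 2)|) := by
        have := mul_le_mul_of_nonneg_right hsin (by positivity : (0 : ℝ) ≤ m ^ 2 * |sin ((φ - ψ) / 2)|)
        nlinarith
    _ ≤ _ := by gcongr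

theorem omegaP_sq (hS : 0 ≤ c1 + c2) (θ : ℝ) :
    omegaP v11 v21 c1 c2 θ ^ 2 = (c1 + c2 + √(diatomicDisc v11 v21 c1 c2 θ)) / 2 := by
  rw [omegaP_eq, sq_sqrt]
  positivity

/-- `ω₋²` and `ω₊²` are the roots of `X² - (c₁ + c₂) X + c₁c₂ - 2v₁₁v₂₁(cos θ + 1)`. -/
theorem omegaM_mul_omegaP (hv : 0 ≤ v11 * v21) (hS : 0 ≤ c1 + c2) (θ : ℝ) :
    omegaM v11 v21 c1 c2 θ * omegaP v11 v21 c1 c2 θ =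
      √(c1 * c2 - 2 * (v11 * v21) * (cos θ + 1)) := by
  rw [omegaM_eq, omegaP_eq, ← sqrt_mul' _ (by positivity)]
  congr 1
  have hD := sq_sqrt (diatomicDisc_nonneg (c1 := c1) (c2 := c2) hv θ)
  rw [diatomicDisc] at hD ⊢
  linear_combination (-1 / 4 : ℝ) * hD

theorem two_mul_sqrt_mul_abs_sin_half_lt_omegaM_mul_omegaP (hv : 0 ≤ v11 * v21)
    (hS : 0 ≤ c1 + c2) (hprod : 4 * (v11 * v21) < c1 * c2) (θ : ℝ) :
    2 * √(v11 * v21) * |sin (θ / 2)| < omegaM v11 v21 c1 c2 θ * omegaP v11 v21 c1 c2 θ := by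
  rw [omegaM_mul_omegaP hv hS]
  apply lt_sqrt_of_sq_lt
  rw [mul_pow, mul_pow, sq_sqrt hv, sq_abs, sin_sq, cos_sq_half]
  linarith

theorem omegaP_le_omegaP_add_omegaP (hv : 0 ≤ v11 * v21) (hS : 0 ≤ c1 + c2)
    (hprod : 4 * (v11 * v21) ≤ c1 * c2) (θ φ ψ : ℝ) :
    omegaP v11 v21 c1 c2 θ ≤ omegaP v11 v21 c1 c2 φ + omegaP v11 v21 c1 c2 ψ := by
  have hθ : √(diatomicDisc v11 v21 c1 c2 θ) ≤ c1 + c2 :=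
    (sqrt_le_left hS).2 (diatomicDisc_le_sq hv hprod θ)
  have hφ := omegaP_nonneg v11 v21 c1 c2 φ
  have hψ := omegaP_nonneg v11 v21 c1 c2 ψ
  apply le_of_sq_le_sq _ (add_nonneg hφ hψ)
  rw [omegaP_sq hS, add_sq, omegaP_sq hS, omegaP_sq hS]
  nlinarith [sqrt_nonneg (diatomicDisc v11 v21 c1 c2 φ), sqrt_nonneg (diatomicDisc v11 v21 c1 c2 ψ),
    mul_nonneg hφ hψ]

end DiatomicChain

theorem no_triple_resonance_general (v11 v21 c1 c2 : ℝ)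
    (hv : v11 * v21 > 0) (hsum : c1 + c2 > 0) (hprod : c1 * c2 > 4 * (v11 * v21))
    (θ : ℝ) :
    omegaM v11 v21 c1 c2 θ + omegaP v11 v21 c1 c2 (2 * θ) ≠
      omegaP v11 v21 c1 c2 (3 * θ) := by
  set A := omegaM v11 v21 c1 c2 θ
  set B := omegaP v11 v21 c1 c2 (2 * θ)
  set C := omegaP v11 v21 c1 c2 (3 * θ)
  have hgap : C ^ 2 - B ^ 2 < A * (B + C) := calc
    C ^ 2 - B ^ 2 =
        (√(diatomicDisc v11 v21 c1 c2 (3 * θ)) - √(diatomicDisc v11 v21 c1 c2 (2 * θ))) / 2 := by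
      rw [omegaP_sq hsum.le, omegaP_sq hsum.le]
      ring
    _ ≤ 2 * √(v11 * v21) * |sin (θ / 2)| := by
      have h := sqrt_diatomicDisc_sub_sqrt_diatomicDisc_le (c1 := c1) (c2 := c2) hv.le (3 * θ) (2 * θ)
      rw [show (3 * θ - 2 * θ) / 2 = θ / 2 by ring] at h
      linarith
    _ < A * omegaP v11 v21 c1 c2 θ :=
      two_mul_sqrt_mul_abs_sin_half_lt_omegaM_mul_omegaP hv.le hsum.le hprod θ
    _ ≤ A * (B + C) :=
      mul_le_mul_of_nonneg_left
        (omegaP_le_omegaP_add_omegaP hv.le hsum.le hprod.le θ (2 * θ) (3 * θ))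
        (omegaM_nonneg v11 v21 c1 c2 θ)
  apply ne_of_gt
  nlinarith [omegaP_nonneg v11 v21 c1 c2 (2 * θ), omegaP_nonneg v11 v21 c1 c2 (3 * θ)]

theorem no_triple_resonance (v11 v21 c1 c2 : ℝ)
    (hv : v11 * v21 > 0) (hsum : c1 + c2 > 0) (hprod : c1 * c2 > 4 * (v11 * v21))
    (hlt : c2 > c1) (θ : ℝ) :
    omegaM v11 v21 c1 c2 θ + omegaP v11 v21 c1 c2 (2 * θ) ≠
      omegaP v11 v21 c1 c2 (3 * θ) :=
  no_triple_resonance_general v11 v21 c1 c2 hv hsum hprod θ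
end

section
/- For every real d₂ > 0 and every c ∈ [1/4, 1] one has √(d₂ + (2c − 1)²) − √(d₂ + c) + 2√((√(d₂ + 1) − √(d₂ + c))(√(d₂ + 1) + √(d₂ + (2c − 1)²))) ≥ 0. -/
/-!
Write `a = √(d₂ + (2c - 1)²) ≤ b = √(d₂ + c) ≤ w = √(d₂ + 1)`. It suffices that
`(b - a)² ≤ 4 (w - b)(w + a)`. The differences of squares factor as `w² - b² = 1 - c` and
`b² - a² = (1 - c)(4c - 1)`, so after multiplying by `w + b` the claim reduces to
`(b - a)² (w + b) ≤ (1 - c)(4c - 1)(w + b) ≤ 4 (1 - c)(w + a)`: the first step is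
`b - a ≤ b + a`, the second the linear estimate `(4c - 1)(w + b) ≤ 4 (w + a)`, which follows
from `b ≤ w` and `(4c - 3) b ≤ 2a`.
-/

lemma le_two_mul_sqrt_of_sq_le_four_mul {x s : ℝ} (h : x ^ 2 ≤ 4 * s) : x ≤ 2 * √s := by
  have : x / 2 ≤ √s := (le_abs_self _).trans (Real.abs_le_sqrt (by linarith))
  linarith

lemma mul_sqrt_add_le_two_mul_sqrt_add {d c : ℝ} (hd : 0 ≤ d) (hc : c ≤ 1) :
    (4 * c - 3) * √(d + c) ≤ 2 * √(d + (2 * c - 1) ^ 2) := by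
  rcases le_total c (3 / 4) with hc' | hc'
  · nlinarith [Real.sqrt_nonneg (d + c), Real.sqrt_nonneg (d + (2 * c - 1) ^ 2)]
  · refine (sq_le_sq₀ (mul_nonneg (by linarith) (Real.sqrt_nonneg _)) (by positivity)).1 ?_
    rw [mul_pow, mul_pow, Real.sq_sqrt (by linarith), Real.sq_sqrt (by positivity)]
    have h1 : (4 * c - 3) ^ 2 ≤ 1 := by nlinarith
    nlinarith [mul_le_mul_of_nonneg_right h1 (by linarith : 0 ≤ d + c)]

section

variable {a b w c : ℝ}

lemma mul_add_le_four_mul_add (hbw : b ≤ w) (hc : c ≤ 1)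
    (hba : (4 * c - 3) * b ≤ 2 * a) : (4 * c - 1) * (w + b) ≤ 4 * (w + a) := by
  nlinarith [mul_le_mul_of_nonneg_left hbw (by linarith : (0 : ℝ) ≤ 5 - 4 * c)]

lemma sub_sq_le_four_mul (ha : 0 ≤ a) (hab : a ≤ b) (hbw : b ≤ w) (hwb : 0 < w + b)
    (hc : c ≤ 1) (hba : (4 * c - 3) * b ≤ 2 * a)
    (hwb2 : w ^ 2 - b ^ 2 = 1 - c) (hba2 : b ^ 2 - a ^ 2 = (1 - c) * (4 * c - 1)) :
    (b - a) ^ 2 ≤ 4 * ((w - b) * (w + a)) := by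
  refine le_of_mul_le_mul_right ?_ hwb
  calc (b - a) ^ 2 * (w + b) ≤ (b - a) * (b + a) * (w + b) := by
        rw [sq]
        gcongr
        linarith
    _ = (1 - c) * ((4 * c - 1) * (w + b)) := by linear_combination (w + b) * hba2
    _ ≤ (1 - c) * (4 * (w + a)) :=
        mul_le_mul_of_nonneg_left (mul_add_le_four_mul_add hbw hc hba) (by linarith)
    _ = 4 * ((w - b) * (w + a)) * (w + b) := by linear_combination (-4) * (w + a) * hwb2

end

theorem triple_resonance_inequality (d2 c : ℝ) (hd2 : d2 > 0)
    (hc1 : 1 / 4 ≤ c) (hc2 : c ≤ 1) :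
    Real.sqrt (d2 + (2 * c - 1) ^ 2) - Real.sqrt (d2 + c) +
      2 * Real.sqrt ((Real.sqrt (d2 + 1) - Real.sqrt (d2 + c)) *
        (Real.sqrt (d2 + 1) + Real.sqrt (d2 + (2 * c - 1) ^ 2))) ≥ 0 := by
  set a := √(d2 + (2 * c - 1) ^ 2)
  set b := √(d2 + c)
  set w := √(d2 + 1)
  have ha2 : a ^ 2 = d2 + (2 * c - 1) ^ 2 := Real.sq_sqrt (by positivity)
  have hb2 : b ^ 2 = d2 + c := Real.sq_sqrt (by linarith)
  have hw2 : w ^ 2 = d2 + 1 := Real.sq_sqrt (by linarith)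
  have hab : a ≤ b := Real.sqrt_le_sqrt (by nlinarith)
  have hbw : b ≤ w := Real.sqrt_le_sqrt (by linarith)
  have hw : 0 < w := Real.sqrt_pos.2 (by linarith)
  have := sub_sq_le_four_mul (Real.sqrt_nonneg _) hab hbw (by positivity) hc2
    (mul_sqrt_add_le_two_mul_sqrt_add hd2.le hc2)
    (by rw [hw2, hb2]; ring) (by rw [hb2, ha2]; ring)
  linarith [le_two_mul_sqrt_of_sq_le_four_mul this]
end

section
/- Let M, m, v₁, w₁, w₂ be real numbers with M > 0, m > 0, w₁ > 0, w₂ > 0 and 4v₁ + min{Mw₁, mw₂} > 0. Then there exist constants κ₁, κ₂ > 0 such that for all square-summable sequences u₁, u₂ : ℤ → ℝ the energy expression ‖u‖_E² := Σ_{j∈ℤ} [ v₁((u₂(j+1) − u₁(j))² + (u₁(j) − u₂(j))²) + M w₁ u₁(j)² + m w₂ u₂(j)² ] satisfies κ₁²(Σ_j u₁(j)² + Σ_j u₂(j)²) ≤ ‖u‖_E² ≤ κ₂²(Σ_j u₁(j)² + Σ_j u₂(j)²); in particular the defining series is absolutely convergent and the energy norm is equivalent to the (ℓ²)² norm. -/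
set_option maxHeartbeats 1000000

theorem energy_norm_equivalent (M m v1 w1 w2 : ℝ)
    (hM : M > 0) (hm : m > 0) (hw1 : w1 > 0) (hw2 : w2 > 0)
    (hstab : 4 * v1 + min (M * w1) (m * w2) > 0) :
    ∃ κ1 > (0 : ℝ), ∃ κ2 > (0 : ℝ),
      ∀ u1 u2 : ℤ → ℝ, Summable (fun j => (u1 j) ^ 2) → Summable (fun j => (u2 j) ^ 2) →
        Summable (fun j : ℤ =>
          v1 * ((u2 (j + 1) - u1 j) ^ 2 + (u1 j - u2 j) ^ 2) +
            M * w1 * (u1 j) ^ 2 + m * w2 * (u2 j) ^ 2) ∧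
        κ1 ^ 2 * ((∑' j : ℤ, (u1 j) ^ 2) + ∑' j : ℤ, (u2 j) ^ 2) ≤
          (∑' j : ℤ, (v1 * ((u2 (j + 1) - u1 j) ^ 2 + (u1 j - u2 j) ^ 2) +
            M * w1 * (u1 j) ^ 2 + m * w2 * (u2 j) ^ 2)) ∧
        (∑' j : ℤ, (v1 * ((u2 (j + 1) - u1 j) ^ 2 + (u1 j - u2 j) ^ 2) +
            M * w1 * (u1 j) ^ 2 + m * w2 * (u2 j) ^ 2)) ≤
          κ2 ^ 2 * ((∑' j : ℤ, (u1 j) ^ 2) + ∑' j : ℤ, (u2 j) ^ 2) := by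
  have hmin : 0 < min (M * w1) (m * w2) := lt_min (by positivity) (by positivity)
  set c1 : ℝ := 4 * min v1 0 + min (M * w1) (m * w2) with hc1def
  set c2 : ℝ := 4 * max v1 0 + max (M * w1) (m * w2) with hc2def
  have hc1 : 0 < c1 := by
    rcases le_or_gt 0 v1 with h | h
    · simp [hc1def, min_eq_right h, hmin]
    · simpa [hc1def, min_eq_left h.le] using hstab
  have hc2 : 0 < c2 := by
    have : 0 ≤ 4 * max v1 0 := by positivity
    have : 0 < max (M * w1) (m * w2) := lt_max_iff.mpr (Or.inl (by positivity))
    simp only [hc2def]; linarith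
  refine ⟨Real.sqrt c1, Real.sqrt_pos.mpr hc1, Real.sqrt c2, Real.sqrt_pos.mpr hc2, ?_⟩
  intro u1 u2 hu1 hu2
  have hk1 : Real.sqrt c1 ^ 2 = c1 := Real.sq_sqrt hc1.le
  have hk2 : Real.sqrt c2 ^ 2 = c2 := Real.sq_sqrt hc2.le
  -- shifted sequence
  have hshift : Summable (fun j : ℤ => (u2 (j + 1)) ^ 2) :=
    (Equiv.addRight (1 : ℤ)).summable_iff.mpr hu2
  have hshift_eq : (∑' j : ℤ, (u2 (j + 1)) ^ 2) = ∑' j : ℤ, (u2 j) ^ 2 :=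
    (Equiv.addRight (1 : ℤ)).tsum_eq (fun j => (u2 j) ^ 2)
  set A : ℤ → ℝ := fun j => (u2 (j + 1) - u1 j) ^ 2 with hA
  set B : ℤ → ℝ := fun j => (u1 j - u2 j) ^ 2 with hB
  have hAle : ∀ j, A j ≤ 2 * (u2 (j + 1)) ^ 2 + 2 * (u1 j) ^ 2 := by
    intro j; simp only [hA]; nlinarith [sq_nonneg (u2 (j + 1) + u1 j)]
  have hBle : ∀ j, B j ≤ 2 * (u1 j) ^ 2 + 2 * (u2 j) ^ 2 := by
    intro j; simp only [hB]; nlinarith [sq_nonneg (u1 j + u2 j)]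
  have hsumAbd : Summable (fun j : ℤ => 2 * (u2 (j + 1)) ^ 2 + 2 * (u1 j) ^ 2) :=
    ((hshift.mul_left 2).add (hu1.mul_left 2))
  have hsumBbd : Summable (fun j : ℤ => 2 * (u1 j) ^ 2 + 2 * (u2 j) ^ 2) :=
    ((hu1.mul_left 2).add (hu2.mul_left 2))
  have hAsum : Summable A :=
    Summable.of_nonneg_of_le (fun j => sq_nonneg _) hAle hsumAbd
  have hBsum : Summable B :=
    Summable.of_nonneg_of_le (fun j => sq_nonneg _) hBle hsumBbd
  set S1 : ℝ := ∑' j : ℤ, (u1 j) ^ 2 with hS1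
  set S2 : ℝ := ∑' j : ℤ, (u2 j) ^ 2 with hS2
  have hS1nn : 0 ≤ S1 := tsum_nonneg fun j => sq_nonneg _
  have hS2nn : 0 ≤ S2 := tsum_nonneg fun j => sq_nonneg _
  set TA : ℝ := ∑' j : ℤ, A j with hTA
  set TB : ℝ := ∑' j : ℤ, B j with hTB
  have hTAnn : 0 ≤ TA := tsum_nonneg fun j => sq_nonneg _
  have hTBnn : 0 ≤ TB := tsum_nonneg fun j => sq_nonneg _
  have hTAle : TA ≤ 2 * S2 + 2 * S1 := by
    have := Summable.tsum_le_tsum hAle hAsum hsumAbd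
    rwa [Summable.tsum_add (hshift.mul_left 2) (hu1.mul_left 2), tsum_mul_left, tsum_mul_left,
      hshift_eq] at this
  have hTBle : TB ≤ 2 * S1 + 2 * S2 := by
    have := Summable.tsum_le_tsum hBle hBsum hsumBbd
    rwa [Summable.tsum_add (hu1.mul_left 2) (hu2.mul_left 2), tsum_mul_left, tsum_mul_left] at this
  -- summability of energy
  have hAB : Summable (fun j : ℤ => A j + B j) := hAsum.add hBsum
  have hEsum : Summable (fun j : ℤ =>
      v1 * ((u2 (j + 1) - u1 j) ^ 2 + (u1 j - u2 j) ^ 2) +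
        M * w1 * (u1 j) ^ 2 + m * w2 * (u2 j) ^ 2) := by
    exact ((hAB.mul_left v1).add (hu1.mul_left (M * w1))).add (hu2.mul_left (m * w2))
  refine ⟨hEsum, ?_, ?_⟩
  all_goals
    have hEeq : (∑' j : ℤ, (v1 * ((u2 (j + 1) - u1 j) ^ 2 + (u1 j - u2 j) ^ 2) +
        M * w1 * (u1 j) ^ 2 + m * w2 * (u2 j) ^ 2)) =
        v1 * (TA + TB) + M * w1 * S1 + m * w2 * S2 := by
      rw [Summable.tsum_add ((hAB.mul_left v1).add (hu1.mul_left (M * w1))) (hu2.mul_left (m * w2)),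
        Summable.tsum_add (hAB.mul_left v1) (hu1.mul_left (M * w1)), tsum_mul_left, tsum_mul_left,
        tsum_mul_left, Summable.tsum_add hAsum hBsum]
    rw [hEeq]
  · -- lower bound
    rw [hk1]
    have h1 : 4 * min v1 0 * (S1 + S2) ≤ v1 * (TA + TB) := by
      rcases le_or_gt 0 v1 with h | h
      · rw [min_eq_right h]; nlinarith
      · rw [min_eq_left h.le]; nlinarith
    have h2 : min (M * w1) (m * w2) * (S1 + S2) ≤ M * w1 * S1 + m * w2 * S2 := by
      have := min_le_left (M * w1) (m * w2)
      have := min_le_right (M * w1) (m * w2)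
      nlinarith
    simp only [hc1def]; nlinarith
  · -- upper bound
    rw [hk2]
    have h1 : v1 * (TA + TB) ≤ 4 * max v1 0 * (S1 + S2) := by
      rcases le_or_gt 0 v1 with h | h
      · rw [max_eq_left h]; nlinarith
      · rw [max_eq_right h.le]; nlinarith
    have h2 : M * w1 * S1 + m * w2 * S2 ≤ max (M * w1) (m * w2) * (S1 + S2) := by
      have := le_max_left (M * w1) (m * w2)
      have := le_max_right (M * w1) (m * w2)
      nlinarith
    simp only [hc2def]; nlinarith
end
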